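/- arXiv:2501.12306 — 8 statements merged into one kernel-verified Lean document; each statement's English description precedes it below -/
import Mathlib

section
/- Let s1 = p1p3 and s2 = p2p4 be two segments crossing at a point x. If a line l strictly separates the segments p1p4 and p2p3 (obtained after a flip), then l crossed both original segments p1p3 and p2p4; hence the flip decreases the number of removed-and-inserted segments crossed by l by exactly 2. -/
noncomputable section

abbrev Pt := EuclideanSpace ℝ (Fin 2)

/-- Two segments cross: unique intersection point, interior to both. -/
def SegCross (a b c d : Pt) : Prop :=
  ∃ x, x ∈ openSegment ℝ a b ∧ x ∈ openSegment ℝ c d ∧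
    ∀ y ∈ segment ℝ a b, y ∈ segment ℝ c d → y = x

/-- The line `{x | f x = c}` crosses the segment `ab`: they meet in exactly
one point which is not an endpoint of the segment. -/
def LCross (f : Pt →ₗ[ℝ] ℝ) (c : ℝ) (a b : Pt) : Prop :=
  ∃ x ∈ segment ℝ a b, f x = c ∧ x ≠ a ∧ x ≠ b ∧
    ∀ y ∈ segment ℝ a b, f y = c → y = x

/-- The line `{x | f x = c}` strictly separates the segments `ab` and `a'b'`:
they lie in the two distinct open half-planes determined by the line. -/
def StrictSep (f : Pt →ₗ[ℝ] ℝ) (c : ℝ) (a b a' b' : Pt) : Prop :=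
  ((∀ x ∈ segment ℝ a b, f x < c) ∧ (∀ x ∈ segment ℝ a' b', c < f x)) ∨
  ((∀ x ∈ segment ℝ a b, c < f x) ∧ (∀ x ∈ segment ℝ a' b', f x < c))

theorem LinearMap.injOn_segment {E : Type*} [AddCommGroup E] [Module ℝ E] (f : E →ₗ[ℝ] ℝ)
    {a b : E} (hab : f a ≠ f b) : Set.InjOn f (segment ℝ a b) := by
  have hmap : ∀ t : ℝ, f (AffineMap.lineMap a b t) = f a + t * (f b - f a) := fun t => by
    simp only [AffineMap.lineMap_apply_module, map_add, map_smul, smul_eq_mul]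
    ring
  rw [segment_eq_image_lineMap]
  rintro _ ⟨s, -, rfl⟩ _ ⟨t, -, rfl⟩ hst
  rw [hmap, hmap, add_right_inj] at hst
  rw [mul_right_cancel₀ (sub_ne_zero.2 hab.symm) hst]

theorem LCross.symm {f : Pt →ₗ[ℝ] ℝ} {c : ℝ} {a b : Pt} (h : LCross f c a b) :
    LCross f c b a := by
  obtain ⟨x, hx, hfx, hxa, hxb, huniq⟩ := h
  rw [segment_symm] at hx huniq
  exact ⟨x, hx, hfx, hxb, hxa, huniq⟩

theorem lcross_of_lt_of_lt {f : Pt →ₗ[ℝ] ℝ} {c : ℝ} {a b : Pt} (ha : f a < c) (hb : c < f b) :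
    LCross f c a b := by
  have hab : f a < f b := ha.trans hb
  set t := (c - f a) / (f b - f a)
  set x := AffineMap.lineMap a b t
  have hfx : f x = c := by
    simp only [x, t, AffineMap.lineMap_apply_module, map_add, map_smul, smul_eq_mul]
    field_simp [(sub_pos.2 hab).ne']
    ring
  have hx : x ∈ segment ℝ a b := by
    rw [segment_eq_image_lineMap]
    refine ⟨t, ⟨div_nonneg ?_ ?_, div_le_one_of_le₀ ?_ ?_⟩, rfl⟩ <;> linarith
  refine ⟨x, hx, hfx, ?_, ?_, fun y hy hfy => ?_⟩
  · intro h; rw [h] at hfx; linarith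
  · intro h; rw [h] at hfx; linarith
  · exact f.injOn_segment hab.ne hy hx (hfy.trans hfx.symm)

theorem not_lcross_of_forall_ne {f : Pt →ₗ[ℝ] ℝ} {c : ℝ} {a b : Pt}
    (h : ∀ x ∈ segment ℝ a b, f x ≠ c) : ¬ LCross f c a b := by
  rintro ⟨x, hx, hfx, -⟩
  exact h x hx hfx

/-- Each removed diagonal `p1p3`, `p2p4` joins an endpoint of `p1p4` to one of `p2p3`, so its
endpoints lie on opposite sides of the separating line. -/
theorem flip_dropping_line_general (p1 p2 p3 p4 : Pt) (f : Pt →ₗ[ℝ] ℝ) (c : ℝ)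
    (hsep : StrictSep f c p1 p4 p2 p3) :
    LCross f c p1 p3 ∧ LCross f c p2 p4 ∧ ¬ LCross f c p1 p4 ∧ ¬ LCross f c p2 p3 := by
  have l14 := left_mem_segment ℝ p1 p4
  have r14 := right_mem_segment ℝ p1 p4
  have l23 := left_mem_segment ℝ p2 p3
  have r23 := right_mem_segment ℝ p2 p3
  rcases hsep with ⟨h14, h23⟩ | ⟨h14, h23⟩
  · exact ⟨lcross_of_lt_of_lt (h14 p1 l14) (h23 p3 r23),
      (lcross_of_lt_of_lt (h14 p4 r14) (h23 p2 l23)).symm,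
      not_lcross_of_forall_ne fun x hx => (h14 x hx).ne,
      not_lcross_of_forall_ne fun x hx => (h23 x hx).ne'⟩
  · exact ⟨(lcross_of_lt_of_lt (h23 p3 r23) (h14 p1 l14)).symm,
      lcross_of_lt_of_lt (h23 p2 l23) (h14 p4 r14),
      not_lcross_of_forall_ne fun x hx => (h14 x hx).ne',
      not_lcross_of_forall_ne fun x hx => (h23 x hx).ne⟩

/-- If a line strictly separates the inserted segments `p1p4` and `p2p3` of a flip,
then it crossed both removed segments `p1p3` and `p2p4` (and of course crosses
neither inserted segment), so the number of removed-and-inserted segments crossed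
by the line drops by exactly 2. -/
theorem flip_dropping_line (p1 p2 p3 p4 : Pt) (f : Pt →ₗ[ℝ] ℝ) (c : ℝ)
    (hf : f ≠ 0)
    (hgp : ∀ a b c', a ∈ ({p1, p2, p3, p4} : Set Pt) → b ∈ ({p1, p2, p3, p4} : Set Pt) →
      c' ∈ ({p1, p2, p3, p4} : Set Pt) → a ≠ b → a ≠ c' → b ≠ c' →
      ¬ Collinear ℝ ({a, b, c'} : Set Pt))
    (hcross : SegCross p1 p3 p2 p4)
    (hsep : StrictSep f c p1 p4 p2 p3) :
    LCross f c p1 p3 ∧ LCross f c p2 p4 ∧ ¬ LCross f c p1 p4 ∧ ¬ LCross f c p2 p3 :=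
  flip_dropping_line_general p1 p2 p3 p4 f c hsep
end
end

section
/- A flip never increases the number of segments of the flipped pair crossed by any fixed line: for any line l and any flip replacing crossing segments p1p3, p2p4 by non-crossing segments p1p4, p2p3, the number of segments among {p1p4, p2p3} crossed by l is at most the number among {p1p3, p2p4} crossed by l. -/
noncomputable section

/-!
A line `{f = c}` avoiding the four points crosses a segment exactly when its endpoints lie on
opposite sides, so both counts only depend on which side each `pᵢ` lies. The new pair can be
crossed more often than the old one only if `p1, p3` lie on one side and `p2, p4` on the other;
but then the crossing point of `p1p3` and `p2p4` would lie on both sides.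
-/

open Set

section Segment

variable {𝕜 E : Type*} [Field 𝕜] [LinearOrder 𝕜] [IsStrictOrderedRing 𝕜]
  [AddCommGroup E] [Module 𝕜 E] {a b x : E}

theorem LinearMap.mem_uIcc_of_mem_segment (f : E →ₗ[𝕜] 𝕜) (hx : x ∈ segment 𝕜 a b) :
    f x ∈ uIcc (f a) (f b) := by
  rw [← segment_eq_uIcc]
  exact image_segment 𝕜 f.toAffineMap a b ▸ mem_image_of_mem f hx

theorem LinearMap.injOn_segment_s2 {f : E →ₗ[𝕜] 𝕜} (h : f a ≠ f b) :
    InjOn f (segment 𝕜 a b) := by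
  rw [segment_eq_image_lineMap]
  refine InjOn.image_of_comp (Function.Injective.injOn ?_)
  convert AffineMap.lineMap_injective 𝕜 h using 1
  ext t
  exact f.toAffineMap.apply_lineMap a b t

end Segment

section Order

variable {α : Type*} [LinearOrder α] {a b a' b' c t : α}

theorem mem_uIcc_iff_not_lt_iff_lt (ha : a ≠ c) (hb : b ≠ c) :
    c ∈ uIcc a b ↔ ¬(c < a ↔ c < b) := by
  rw [mem_uIcc]
  rcases ha.lt_or_gt with ha | ha <;> rcases hb.lt_or_gt with hb | hb <;>
    simp [ha, hb, ha.le, hb.le, ha.not_gt, hb.not_gt, ha.not_ge, hb.not_ge]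

theorem lt_of_mem_uIcc_of_mem_uIcc (ht : t ∈ uIcc a b) (ht' : t ∈ uIcc a' b')
    (hab : c < a ↔ c < b) (hab' : c < a' ↔ c < b') (ha : c < a) : c < a' := by
  by_contra ha'
  have hb' : ¬c < b' := mt hab'.2 ha'
  have hct : c < t := (lt_inf_iff.2 ⟨ha, hab.1 ha⟩).trans_le ht.1
  exact (ht'.2.trans (sup_le (not_lt.1 ha') (not_lt.1 hb'))).not_gt hct

theorem lt_iff_lt_of_mem_uIcc_of_mem_uIcc (ht : t ∈ uIcc a b) (ht' : t ∈ uIcc a' b')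
    (hab : c < a ↔ c < b) (hab' : c < a' ↔ c < b') : c < a ↔ c < a' :=
  ⟨lt_of_mem_uIcc_of_mem_uIcc ht ht' hab hab', lt_of_mem_uIcc_of_mem_uIcc ht' ht hab' hab⟩

end Order

theorem lCross_iff {f : Pt →ₗ[ℝ] ℝ} {c : ℝ} {a b : Pt} (ha : f a ≠ c) (hb : f b ≠ c) :
    LCross f c a b ↔ ¬(c < f a ↔ c < f b) := by
  rw [← mem_uIcc_iff_not_lt_iff_lt ha hb]
  constructor
  · rintro ⟨x, hx, rfl, -⟩
    exact f.mem_uIcc_of_mem_segment hx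
  · intro hc
    have hab : f a ≠ f b := by
      rintro hab
      rw [hab, uIcc_self, mem_singleton_iff] at hc
      exact hb hc.symm
    obtain ⟨x, hx, rfl⟩ : c ∈ f.toAffineMap '' segment ℝ a b := by
      rw [image_segment, segment_eq_uIcc]
      exact hc
    exact ⟨x, hx, rfl, fun hxa => ha (hxa ▸ rfl), fun hxb => hb (hxb ▸ rfl),
      fun y hy hfy => f.injOn_segment_s2 hab hy hx hfy⟩

theorem flip_count_le {P₁ P₂ P₃ P₄ : Prop}
    [Decidable P₁] [Decidable P₂] [Decidable P₃] [Decidable P₄]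
    (h : (P₁ ↔ P₃) → (P₂ ↔ P₄) → (P₁ ↔ P₂)) :
    (if ¬(P₁ ↔ P₄) then 1 else 0) + (if ¬(P₂ ↔ P₃) then 1 else 0) ≤
      (if ¬(P₁ ↔ P₃) then 1 else 0) + (if ¬(P₂ ↔ P₄) then 1 else 0) := by
  by_cases P₁ <;> by_cases P₂ <;> by_cases P₃ <;> by_cases P₄ <;> simp_all

open Classical in
theorem flip_line_potential_monotone_general (p1 p2 p3 p4 : Pt) (f : Pt →ₗ[ℝ] ℝ) (c : ℝ)
    (hcross : SegCross p1 p3 p2 p4)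
    (h1 : f p1 ≠ c) (h2 : f p2 ≠ c) (h3 : f p3 ≠ c) (h4 : f p4 ≠ c) :
    (if LCross f c p1 p4 then 1 else 0) + (if LCross f c p2 p3 then 1 else 0) ≤
      (if LCross f c p1 p3 then 1 else 0) + (if LCross f c p2 p4 then 1 else 0) := by
  obtain ⟨x, hx13, hx24, -⟩ := hcross
  have hsides : (c < f p1 ↔ c < f p3) → (c < f p2 ↔ c < f p4) → (c < f p1 ↔ c < f p2) :=
    lt_iff_lt_of_mem_uIcc_of_mem_uIcc
      (f.mem_uIcc_of_mem_segment (openSegment_subset_segment ℝ p1 p3 hx13))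
      (f.mem_uIcc_of_mem_segment (openSegment_subset_segment ℝ p2 p4 hx24))
  simp only [lCross_iff h1 h4, lCross_iff h2 h3, lCross_iff h1 h3, lCross_iff h2 h4]
  exact flip_count_le hsides

open Classical in
/-- A flip never increases the number of segments of the flipped pair crossed by a
fixed line: the number of segments among `{p1p4, p2p3}` crossed by the line is at
most the number among `{p1p3, p2p4}` crossed by it. -/
theorem flip_line_potential_monotone (p1 p2 p3 p4 : Pt) (f : Pt →ₗ[ℝ] ℝ) (c : ℝ)
    (hf : f ≠ 0)
    (hgp : ∀ a b c', a ∈ ({p1, p2, p3, p4} : Set Pt) → b ∈ ({p1, p2, p3, p4} : Set Pt) →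
      c' ∈ ({p1, p2, p3, p4} : Set Pt) → a ≠ b → a ≠ c' → b ≠ c' →
      ¬ Collinear ℝ ({a, b, c'} : Set Pt))
    (hcross : SegCross p1 p3 p2 p4)
    (hnocross : ¬ SegCross p1 p4 p2 p3)
    (h1 : f p1 ≠ c) (h2 : f p2 ≠ c) (h3 : f p3 ≠ c) (h4 : f p4 ≠ c) :
    (if LCross f c p1 p4 then 1 else 0) + (if LCross f c p2 p3 then 1 else 0) ≤
      (if LCross f c p1 p3 then 1 else 0) + (if LCross f c p2 p4 then 1 else 0) :=
  flip_line_potential_monotone_general p1 p2 p3 p4 f c hcross h1 h2 h3 h4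
end
end

section
/- Let p1p3 and p2p4 be crossing segments meeting at point x, and let q be a point in the open triangle with vertices p1, x, p4. Then the line through q and p1 crosses the segment p2p4, and the line through q and p4 crosses the segment p1p3. -/
/-! The barycentric coordinates of `q` in the triangle `p1 x p4` are positive, so `q` lies strictly
between `p1` and a point `y` strictly inside the segment `x p4`, hence inside `p2 p4`. Since `p1`
is off the line `p2 p4`, the line `q p1` meets it only at `y`. The second claim is the same
argument with the roles of `p1` and `p4` exchanged. -/

noncomputable section

/-- The line through `a` and `b` crosses the segment `cd`: they meet in exactly
one point, which is not an endpoint of the segment. -/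
def LineThroughCrosses (a b c d : Pt) : Prop :=
  ∃ x ∈ segment ℝ c d, Collinear ℝ ({a, b, x} : Set Pt) ∧ x ≠ c ∧ x ≠ d ∧
    ∀ y ∈ segment ℝ c d, Collinear ℝ ({a, b, y} : Set Pt) → y = x

lemma LineThroughCrosses.segment_symm {a b c d : Pt} (h : LineThroughCrosses a b c d) :
    LineThroughCrosses a b d c := by
  obtain ⟨z, hz, hcol, hzc, hzd, huniq⟩ := h
  exact ⟨z, _root_.segment_symm ℝ c d ▸ hz, hcol, hzd, hzc,
    fun y hy hycol => huniq y (_root_.segment_symm ℝ d c ▸ hy) hycol⟩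

section Convex

variable {𝕜 E : Type*} [Field 𝕜] [LinearOrder 𝕜] [IsStrictOrderedRing 𝕜] [AddCommGroup E]
  [Module 𝕜 E]

lemma openSegment_subset_openSegment_of_mem {x y z : E} (hy : y ∈ openSegment 𝕜 x z) :
    openSegment 𝕜 y z ⊆ openSegment 𝕜 x z := by
  obtain ⟨u, v, hu, hv, huv, rfl⟩ := hy
  rintro _ ⟨s, t, hs, ht, hst, rfl⟩
  exact ⟨s * u, s * v + t, by positivity, by positivity, by linear_combination s * huv + hst,
    by module⟩

lemma exists_mem_openSegment_of_pos_combination {a b c : E} {α β γ : 𝕜} (hα : 0 < α)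
    (hβ : 0 < β) (hγ : 0 < γ) (hsum : α + β + γ = 1) :
    ∃ y ∈ openSegment 𝕜 b c, α • a + β • b + γ • c ∈ openSegment 𝕜 a y := by
  have hβγ : β + γ ≠ 0 := by positivity
  refine ⟨(β / (β + γ)) • b + (γ / (β + γ)) • c,
    ⟨β / (β + γ), γ / (β + γ), by positivity, by positivity, by field_simp, rfl⟩,
    ⟨α, β + γ, hα, by positivity, by linear_combination hsum, ?_⟩⟩
  rw [smul_add, smul_smul, smul_smul, mul_div_cancel₀ _ hβγ, mul_div_cancel₀ _ hβγ, add_assoc]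

end Convex

lemma exists_pos_combination_of_mem_interior_convexHull {E : Type*} [NormedAddCommGroup E]
    [NormedSpace ℝ E] (hE : Module.finrank ℝ E = 2) {a b c q : E}
    (hnc : ¬Collinear ℝ ({a, b, c} : Set E)) (hq : q ∈ interior (convexHull ℝ {a, b, c})) :
    ∃ α β γ : ℝ, 0 < α ∧ 0 < β ∧ 0 < γ ∧ α + β + γ = 1 ∧ α • a + β • b + γ • c = q := by
  have hind : AffineIndependent ℝ ![a, b, c] := affineIndependent_iff_not_collinear_set.2 hnc
  have : FiniteDimensional ℝ E := Module.finite_of_finrank_eq_succ hE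
  let T : AffineBasis (Fin 3) ℝ E :=
    ⟨![a, b, c], hind, hind.affineSpan_eq_top_iff_card_eq_finrank_add_one.2 (by simp [hE])⟩
  have hT : Set.range T = {a, b, c} := by
    change Set.range ![a, b, c] = _
    simp only [Matrix.range_cons, Matrix.range_empty, Set.singleton_union, Set.union_empty]
  rw [← hT, T.interior_convexHull] at hq
  refine ⟨T.coord 0 q, T.coord 1 q, T.coord 2 q, hq 0, hq 1, hq 2, ?_, ?_⟩
  · simpa only [Fin.sum_univ_three] using T.sum_coord_apply_eq_one q
  · exact (Fin.sum_univ_three _).symm.trans (T.linear_combination_coord_eq_self q)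

lemma eq_of_collinear_of_mem_affineSpan_pair {k V P : Type*} [Field k] [AddCommGroup V]
    [Module k V] [AddTorsor V P] {q a y y' c d : P} (hqa : q ≠ a) (ha : a ∉ line[k, c, d])
    (hy : y ∈ line[k, c, d]) (hy' : y' ∈ line[k, c, d]) (h : Collinear k ({q, a, y} : Set P))
    (h' : Collinear k ({q, a, y'} : Set P)) : y' = y := by
  by_contra hne
  have hcol : Collinear k ({y', q, a, y} : Set P) := by
    rw [h.collinear_insert_iff_of_ne (by simp) (by simp) hqa]
    exact h'.subset fun z => by simp only [Set.mem_insert_iff, Set.mem_singleton_iff]; tauto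
  have hmem : a ∈ line[k, y', y] :=
    hcol.mem_affineSpan_of_mem_of_ne (by simp) (by simp) (by simp) hne
  exact ha (affineSpan_pair_le_of_mem_of_mem hy' hy hmem)

lemma lineThroughCrosses_of_mem_openSegment {q a c d y : Pt} (hcd : c ≠ d)
    (ha : a ∉ line[ℝ, c, d]) (hqa : q ≠ a) (hy : y ∈ openSegment ℝ c d)
    (hcol : Collinear ℝ ({q, a, y} : Set Pt)) : LineThroughCrosses q a c d := by
  have hline {z} (hz : z ∈ segment ℝ c d) : z ∈ line[ℝ, c, d] :=
    (mem_segment_iff_wbtw.1 hz).mem_affineSpan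
  refine ⟨y, openSegment_subset_segment ℝ c d hy, hcol, ?_, ?_, fun y' hy' hcol' =>
    eq_of_collinear_of_mem_affineSpan_pair hqa ha (hline (openSegment_subset_segment ℝ c d hy))
      (hline hy') hcol hcol'⟩
  · rintro rfl
    exact hcd (left_mem_openSegment_iff.1 hy)
  · rintro rfl
    exact hcd (right_mem_openSegment_iff.1 hy)

lemma lineThroughCrosses_of_mem_interior_triangle {a c d e q : Pt} (he : e ∈ openSegment ℝ c d)
    (hnc : ¬Collinear ℝ ({a, e, d} : Set Pt))
    (hq : q ∈ interior (convexHull ℝ ({a, e, d} : Set Pt))) (hqa : q ≠ a) :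
    LineThroughCrosses q a c d := by
  have hcd : c ≠ d := by
    rintro rfl
    rw [openSegment_same, Set.mem_singleton_iff] at he
    subst he
    exact hnc (by simpa using collinear_pair ℝ a e)
  have ha : a ∉ line[ℝ, c, d] := fun ha =>
    hnc (collinear_triple_of_mem_affineSpan_pair ha
      (mem_segment_iff_wbtw.1 (openSegment_subset_segment ℝ c d he)).mem_affineSpan
      (right_mem_affineSpan_pair ℝ c d))
  obtain ⟨α, β, γ, hα, hβ, hγ, hsum, hcomb⟩ :=
    exists_pos_combination_of_mem_interior_convexHull finrank_euclideanSpace_fin hnc hq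
  obtain ⟨y, hy, hqy⟩ := exists_mem_openSegment_of_pos_combination (a := a) hα hβ hγ hsum
  rw [hcomb] at hqy
  have hcol : Collinear ℝ ({q, a, y} : Set Pt) := by
    rw [Set.insert_comm]
    exact (mem_segment_iff_wbtw.1 (openSegment_subset_segment ℝ a y hqy)).collinear
  exact lineThroughCrosses_of_mem_openSegment hcd ha hqa
    (openSegment_subset_openSegment_of_mem he hy) hcol

theorem critical_lines_through_triangle_general (p1 p2 p3 p4 x q : Pt)
    (hx1 : x ∈ openSegment ℝ p1 p3) (hx2 : x ∈ openSegment ℝ p2 p4)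
    (hnc : ¬ Collinear ℝ ({p1, x, p4} : Set Pt))
    (hq : q ∈ interior (convexHull ℝ ({p1, x, p4} : Set Pt)))
    (hq1 : q ≠ p1) (hq4 : q ≠ p4) :
    LineThroughCrosses q p1 p2 p4 ∧ LineThroughCrosses q p4 p1 p3 := by
  have hswap : ({p4, x, p1} : Set Pt) = {p1, x, p4} := by
    rw [Set.insert_comm, Set.pair_comm, Set.insert_comm]
  refine ⟨lineThroughCrosses_of_mem_interior_triangle hx2 hnc hq hq1, ?_⟩
  rw [← hswap] at hnc hq
  exact (lineThroughCrosses_of_mem_interior_triangle (openSegment_symm ℝ p1 p3 ▸ hx1) hnc hq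
    hq4).segment_symm

/-- If `p1p3` and `p2p4` cross at `x` and `q` lies in the open triangle `p1 x p4`,
then the line through `q` and `p1` crosses the segment `p2p4`, and the line
through `q` and `p4` crosses the segment `p1p3`. -/
theorem critical_lines_through_triangle (p1 p2 p3 p4 x q : Pt)
    (hx1 : x ∈ openSegment ℝ p1 p3) (hx2 : x ∈ openSegment ℝ p2 p4)
    (huniq : ∀ y ∈ segment ℝ p1 p3, y ∈ segment ℝ p2 p4 → y = x)
    (hnc : ¬ Collinear ℝ ({p1, x, p4} : Set Pt))
    (hq : q ∈ interior (convexHull ℝ ({p1, x, p4} : Set Pt)))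
    (hq1 : q ≠ p1) (hq2 : q ≠ p2) (hq3 : q ≠ p3) (hq4 : q ≠ p4) :
    LineThroughCrosses q p1 p2 p4 ∧ LineThroughCrosses q p4 p1 p3 :=
  critical_lines_through_triangle_general p1 p2 p3 p4 x q hx1 hx2 hnc hq hq1 hq4
end
end

section
/- For any triangle p1p2p3 and any segment qq' intersecting the interior of the triangle p1p2p3, there exists a segment s among qp1, qp2, qp3, q'p1, q'p2, q'p3 that intersects the interior of the triangle p1p2p3. -/
/-!
In barycentric coordinates with respect to the triangle, its interior is the set where all three
coordinates are positive. Each coordinate is affine, so if it is positive at a point of `qq'` it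
is positive at `q` or at `q'`. By pigeonhole one endpoint `r` then has at most one nonpositive
coordinate, say the `i`-th, and the points of the segment `r pᵢ` close enough to `pᵢ` have all
coordinates positive.
-/

noncomputable section

open Finset in
theorem exists_forall_ne_of_card_filter_not_le_one {ι : Type*} [Fintype ι] [Nonempty ι]
    {P : ι → Prop} [DecidablePred P] (h : #{j | ¬P j} ≤ 1) : ∃ i, ∀ j ≠ i, P j := by
  obtain ⟨i, hi⟩ := card_le_one_iff_subset_singleton.1 h
  exact ⟨i, fun j hj => by_contra fun hPj => hj (mem_singleton.1 (hi (by simp [hPj])))⟩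

open Finset in
theorem exists_forall_ne_or_exists_forall_ne {ι : Type*} [Fintype ι] [Nonempty ι]
    (hι : Fintype.card ι ≤ 3) {P Q : ι → Prop} (h : ∀ i, P i ∨ Q i) :
    (∃ i, ∀ j ≠ i, P j) ∨ (∃ i, ∀ j ≠ i, Q j) := by
  classical
  have hdisj : Disjoint (univ.filter fun j => ¬P j) (univ.filter fun j => ¬Q j) :=
    disjoint_filter.2 fun j _ hP hQ => (h j).elim hP hQ
  have hcard := (card_union_of_disjoint hdisj).symm.trans_le (card_le_univ _)
  rcases le_or_gt #{j | ¬P j} 1 with hP | hP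
  · exact .inl (exists_forall_ne_of_card_filter_not_le_one hP)
  · exact .inr (exists_forall_ne_of_card_filter_not_le_one (by omega))

theorem AffineMap.pos_or_pos_of_mem_segment {k E : Type*} [Field k] [LinearOrder k]
    [IsStrictOrderedRing k] [AddCommGroup E] [Module k E] (f : E →ᵃ[k] k) {x q q' : E}
    (hx : x ∈ segment k q q') (hfx : 0 < f x) : 0 < f q ∨ 0 < f q' := by
  by_contra! h
  have : f x ∈ segment k (f q) (f q') := image_segment k f q q' ▸ Set.mem_image_of_mem f hx
  exact hfx.not_ge ((convex_Iic 0).segment_subset h.1 h.2 this)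

namespace AffineBasis

variable {ι k E : Type*} [Field k] [LinearOrder k] [IsStrictOrderedRing k] [AddCommGroup E]
  [Module k E] (b : AffineBasis ι k E)

theorem exists_mem_segment_vertex_forall_coord_pos {r : E} {i : ι}
    (hr : ∀ j ≠ i, 0 < b.coord j r) : ∃ z ∈ segment k r (b i), ∀ j, 0 < b.coord j z := by
  classical
  -- the witness has `i`-th coordinate `1 - δ (1 - cᵢ) ≥ 1/2` and `j`-th coordinate `δ cⱼ > 0`
  set δ : k := 1 / (2 * (|b.coord i r| + 1))
  have hδ0 : 0 < δ := by positivity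
  have hδ : δ * (|b.coord i r| + 1) = 1 / 2 := by
    simp only [δ]; field_simp
  have hδ1 : δ ≤ 1 := by nlinarith [abs_nonneg (b.coord i r)]
  refine ⟨AffineMap.lineMap (b i) r δ, segment_symm k r (b i) ▸
    lineMap_mem_segment k _ _ ⟨hδ0.le, hδ1⟩, fun j => ?_⟩
  rw [(b.coord j).apply_lineMap, AffineMap.lineMap_apply_ring, b.coord_apply]
  split_ifs with hji
  · subst hji
    nlinarith [neg_abs_le (b.coord j r)]
  · nlinarith [hr j hji]

theorem exists_segment_vertex_forall_coord_pos [Fintype ι] (hι : Fintype.card ι ≤ 3)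
    {x q q' : E} (hx : x ∈ segment k q q') (hxpos : ∀ i, 0 < b.coord i x) :
    ∃ r ∈ ({q, q'} : Set E), ∃ i, ∃ z ∈ segment k r (b i), ∀ j, 0 < b.coord j z := by
  have := b.nonempty
  rcases exists_forall_ne_or_exists_forall_ne hι
      fun i => (b.coord i).pos_or_pos_of_mem_segment hx (hxpos i) with ⟨i, hi⟩ | ⟨i, hi⟩
  · exact ⟨q, .inl rfl, i, b.exists_mem_segment_vertex_forall_coord_pos hi⟩
  · exact ⟨q', .inr rfl, i, b.exists_mem_segment_vertex_forall_coord_pos hi⟩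

end AffineBasis

theorem exists_affineBasis_range_eq_of_not_collinear {k V P : Type*} [DivisionRing k]
    [AddCommGroup V] [Module k V] [AddTorsor V P] (hV : Module.finrank k V = 2) {p1 p2 p3 : P}
    (hnd : ¬Collinear k ({p1, p2, p3} : Set P)) :
    ∃ b : AffineBasis (Fin 3) k P, Set.range b = {p1, p2, p3} := by
  have : FiniteDimensional k V := Module.finite_of_finrank_eq_succ hV
  have hind : AffineIndependent k ![p1, p2, p3] := affineIndependent_iff_not_collinear_set.2 hnd
  have htop : affineSpan k (Set.range ![p1, p2, p3]) = ⊤ :=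
    hind.affineSpan_eq_top_iff_card_eq_finrank_add_one.2 (by simp [hV])
  refine ⟨⟨![p1, p2, p3], hind, htop⟩, ?_⟩
  change Set.range ![p1, p2, p3] = _
  rw [Matrix.range_cons, Matrix.range_cons_cons_empty, Set.singleton_union]

theorem triangleHide_general (p1 p2 p3 q q' : Pt)
    (hnd : ¬ Collinear ℝ ({p1, p2, p3} : Set Pt))
    (hseg : (segment ℝ q q' ∩ interior (convexHull ℝ ({p1, p2, p3} : Set Pt))).Nonempty) :
    ∃ a ∈ ({q, q'} : Set Pt), ∃ b ∈ ({p1, p2, p3} : Set Pt),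
      (segment ℝ a b ∩ interior (convexHull ℝ ({p1, p2, p3} : Set Pt))).Nonempty := by
  obtain ⟨b, hb⟩ := exists_affineBasis_range_eq_of_not_collinear (by simp) hnd
  rw [← hb, b.interior_convexHull] at hseg ⊢
  obtain ⟨x, hx, hxpos⟩ := hseg
  obtain ⟨r, hr, i, z, hz, hzpos⟩ :=
    b.exists_segment_vertex_forall_coord_pos (by simp) hx hxpos
  exact ⟨r, hr, b i, Set.mem_range_self i, z, hz, hzpos⟩

/-- For any nondegenerate triangle `p1p2p3` and any segment `qq'` meeting the open
interior of the triangle, some segment from an endpoint of `qq'` to a vertex of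
the triangle also meets the interior of the triangle. -/
theorem triangleHide (p1 p2 p3 q q' : Pt)
    (hnd : ¬ Collinear ℝ ({p1, p2, p3} : Set Pt))
    (hgp : ∀ a b c, a ∈ ({p1, p2, p3, q, q'} : Set Pt) → b ∈ ({p1, p2, p3, q, q'} : Set Pt) →
      c ∈ ({p1, p2, p3, q, q'} : Set Pt) → a ≠ b → a ≠ c → b ≠ c →
      ¬ Collinear ℝ ({a, b, c} : Set Pt))
    (hseg : (segment ℝ q q' ∩ interior (convexHull ℝ ({p1, p2, p3} : Set Pt))).Nonempty) :
    ∃ a ∈ ({q, q'} : Set Pt), ∃ b ∈ ({p1, p2, p3} : Set Pt),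
      (segment ℝ a b ∩ interior (convexHull ℝ ({p1, p2, p3} : Set Pt))).Nonempty :=
  triangleHide_general p1 p2 p3 q q' hnd hseg
end
end

section
/- Let p1p2 and p3p4 be two crossing segments and l a line containing p1 and crossing the segment p3p4. Then at least one of the two pairs {p1p3, p2p4} or {p1p4, p2p3} has the property that neither segment of the pair crosses l. -/
/-! A segment crossing the line `f = c` has its endpoints strictly on opposite sides of it:
`(f a - c) * (f b - c) < 0`. So no segment from `p1 ∈ l` crosses `l`; and as `p3`, `p4` lie on
opposite sides, `p2` is weakly on the side of one of them, and the segment from `p2` to that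
point does not cross `l` either. -/

noncomputable section

lemma sub_mul_sub_neg_of_mem_openSegment {𝕜 : Type*} [Field 𝕜] [LinearOrder 𝕜]
    [IsStrictOrderedRing 𝕜] {α β c : 𝕜} (hc : c ∈ openSegment 𝕜 α β) (hne : α ≠ β) :
    (α - c) * (β - c) < 0 := by
  obtain ⟨u, v, hu, hv, huv, rfl⟩ := hc
  obtain rfl : u = 1 - v := by linarith
  have hsq : 0 < (α - β) ^ 2 := by positivity [sub_ne_zero.mpr hne]
  calc (α - ((1 - v) * α + v * β)) * (β - ((1 - v) * α + v * β))
      = -((1 - v) * v * (α - β) ^ 2) := by ring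
    _ < 0 := neg_neg_of_pos (by positivity)

section

variable {f : Pt →ₗ[ℝ] ℝ} {c : ℝ} {a b : Pt}

/-- If `f a = f b`, the segment lies in the line, and uniqueness of the crossing point
forces `a = x`. -/
lemma LCross.sub_mul_sub_neg (h : LCross f c a b) : (f a - c) * (f b - c) < 0 := by
  obtain ⟨x, hx, hfx, hxa, hxb, huniq⟩ := h
  have hc : c ∈ openSegment ℝ (f a) (f b) := by
    rw [← hfx, ← f.coe_toAffineMap, ← image_openSegment]
    exact Set.mem_image_of_mem _ (mem_openSegment_of_ne_left_right hxa.symm hxb.symm hx)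
  refine sub_mul_sub_neg_of_mem_openSegment hc fun hab => hxa ?_
  rw [hab, openSegment_same, Set.mem_singleton_iff] at hc
  exact (huniq a (left_mem_segment ℝ a b) (hab.trans hc.symm)).symm

lemma not_lCross_of_nonneg (h : 0 ≤ (f a - c) * (f b - c)) : ¬ LCross f c a b :=
  fun hl => h.not_gt hl.sub_mul_sub_neg

end

theorem insertion_choice_avoids_line_general (p1 p2 p3 p4 : Pt) (f : Pt →ₗ[ℝ] ℝ) (c : ℝ)
    (hp1 : f p1 = c)
    (hl : LCross f c p3 p4) :
    (¬ LCross f c p1 p3 ∧ ¬ LCross f c p2 p4) ∨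
    (¬ LCross f c p1 p4 ∧ ¬ LCross f c p2 p3) := by
  have hp1_avoids : ∀ b, ¬ LCross f c p1 b := fun b => not_lCross_of_nonneg (by simp [hp1])
  have h34 := hl.sub_mul_sub_neg
  have hp2_side : 0 ≤ (f p2 - c) * (f p4 - c) ∨ 0 ≤ (f p2 - c) * (f p3 - c) := by
    by_contra! h
    nlinarith [mul_pos_of_neg_of_neg h.1 h.2, sq_nonneg (f p2 - c)]
  rcases hp2_side with h24 | h23
  · exact .inl ⟨hp1_avoids p3, not_lCross_of_nonneg h24⟩
  · exact .inr ⟨hp1_avoids p4, not_lCross_of_nonneg h23⟩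

/-- If `p1p2` and `p3p4` cross, and a line through `p1` crosses `p3p4`, then one of
the two insertion choices `{p1p3, p2p4}` or `{p1p4, p2p3}` yields a pair where
neither segment crosses the line. -/
theorem insertion_choice_avoids_line (p1 p2 p3 p4 : Pt) (f : Pt →ₗ[ℝ] ℝ) (c : ℝ)
    (hf : f ≠ 0)
    (hgp : ∀ a b c', a ∈ ({p1, p2, p3, p4} : Set Pt) → b ∈ ({p1, p2, p3, p4} : Set Pt) →
      c' ∈ ({p1, p2, p3, p4} : Set Pt) → a ≠ b → a ≠ c' → b ≠ c' →
      ¬ Collinear ℝ ({a, b, c'} : Set Pt))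
    (hp1 : f p1 = c) (hp2 : f p2 ≠ c) (hp3 : f p3 ≠ c) (hp4 : f p4 ≠ c)
    (hcross : SegCross p1 p2 p3 p4)
    (hl : LCross f c p3 p4) :
    (¬ LCross f c p1 p3 ∧ ¬ LCross f c p2 p4) ∨
    (¬ LCross f c p1 p4 ∧ ¬ LCross f c p2 p3) :=
  insertion_choice_avoids_line_general p1 p2 p3 p4 f c hp1 hl
end
end

section
/- Let a < c < b < d be indices of points p_a, p_c, p_b, p_d in convex position (in this cyclic order along the convex hull) with depth of a segment p_i p_j defined as |i - j|. For the flip removing segments p_a p_b and p_c p_d, at least one of the two insertion choices {p_a p_c, p_b p_d} or {p_a p_d, p_c p_b} yields a pair whose product of depths is at most 3/4 of the product of depths of the removed pair. -/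
/-!
The two inserted pairs always split the removed product exactly:
`(c - a)(d - b) + (d - a)(b - c) = (b - a)(d - c)` (Euler's four-point identity, the
collinear case of Ptolemy's theorem). Hence one of them is at most half of it, and
a fortiori at most `3/4` of it.
-/

theorem sub_mul_sub_add_sub_mul_sub {R : Type*} [CommRing R] (a b c d : R) :
    (c - a) * (d - b) + (d - a) * (b - c) = (b - a) * (d - c) := by
  ring

theorem le_half_or_le_half_of_add_eq {K : Type*} [Field K] [LinearOrder K] [IsStrictOrderedRing K]
    {p q r : K} (h : p + q = r) : p ≤ r / 2 ∨ q ≤ r / 2 := by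
  by_contra! hpq
  linarith [hpq.1, hpq.2]

/-- For indices `a < c < b < d` of points in convex position, with depth
`D(i,j) = |i-j|`, one of the two insertion choices has product of depths at most
`3/4` of the product of depths of the removed pair. -/
theorem depth_product_insertion_choice (a c b d : ℕ)
    (h1 : a < c) (h2 : c < b) (h3 : b < d) :
    ((c : ℝ) - a) * ((d : ℝ) - b) ≤ 3 / 4 * (((b : ℝ) - a) * ((d : ℝ) - c)) ∨
    ((d : ℝ) - a) * ((b : ℝ) - c) ≤ 3 / 4 * (((b : ℝ) - a) * ((d : ℝ) - c)) := by
  have hab : (a : ℝ) ≤ b := by exact_mod_cast (h1.trans h2).le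
  have hcd : (c : ℝ) ≤ d := by exact_mod_cast (h2.trans h3).le
  have removed_nonneg : 0 ≤ ((b : ℝ) - a) * (d - c) :=
    mul_nonneg (sub_nonneg.2 hab) (sub_nonneg.2 hcd)
  have half_le : ((b : ℝ) - a) * (d - c) / 2 ≤ 3 / 4 * (((b : ℝ) - a) * (d - c)) := by
    linarith
  exact (le_half_or_le_half_of_add_eq (sub_mul_sub_add_sub_mul_sub (a : ℝ) b c d)).imp
    (·.trans half_le) (·.trans half_le)
end

section
/- Let the potential Phi_T(S) be the sum over all segments p_i p_j of S having at least one endpoint in T of |i - j|, where points are sorted by decreasing y-coordinate, T1 lies above line l1, the convex set C between l1 and l2, and T2 below l2. Then any flip involving at least one endpoint in T = T1 ∪ T2 strictly decreases Phi_T(S), and flips involving only points of C leave Phi_T(S) unchanged, where the insertion choice for flips involving T inserts the pair {p_a p_b, p_c p_d} when the four flipped points in vertical order are p_a, p_b, p_c, p_d with a<b<c<d. -/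
noncomputable section

def ConvexPos (P : Set Pt) : Prop := ∀ p ∈ P, p ∉ convexHull ℝ (P \ {p})

/-- Index distance `|i - j|` of a segment given by an index pair. -/
def idist {N : ℕ} (e : Fin N × Fin N) : ℕ :=
  max e.1.val e.2.val - min e.1.val e.2.val

/-- The potential `Φ_T(S)`: sum of `|i - j|` over all segments of `S` with at
least one endpoint (index) in `T`. -/
def PhiT {N : ℕ} (T : Finset (Fin N)) (S : Multiset (Fin N × Fin N)) : ℕ :=
  ((S.filter (fun e => e.1 ∈ T ∨ e.2 ∈ T)).map idist).sum

/-!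
Crossing segments cannot be separated by a horizontal line, so a crossing pair on `a < b < c < d`
is `{ac, bd}` or `{ad, bc}`, never `{ab, cd}`; both have total length `|ab| + |cd| + 2 (c - b)`.
Since `T1` lies above `C` and `T2` below it, the indices outside `T = T1 ∪ T2` form an interval.
A case check on which of `a, b, c, d` lie in `T` then shows that the segments `ab, cd` counted in
`Φ_T` weigh strictly less than the counted crossing ones. Flips inside `C` touch no segment
counted in `Φ_T`.
-/

theorem SegCross.symm {p q u v : Pt} (h : SegCross p q u v) : SegCross u v p q := by
  obtain ⟨x, hpq, huv, huniq⟩ := h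
  exact ⟨x, huv, hpq, fun y hy hy' => huniq y hy' hy⟩

theorem SegCross.swap_left {p q u v : Pt} (h : SegCross p q u v) : SegCross q p u v := by
  obtain ⟨x, hpq, huv, huniq⟩ := h
  refine ⟨x, openSegment_symm ℝ p q ▸ hpq, huv, fun y hy => huniq y ?_⟩
  rwa [segment_symm]

theorem not_segCross_of_separated {p q u v : Pt} {t : ℝ} (hp : t < p 1) (hq : t < q 1)
    (hu : u 1 ≤ t) (hv : v 1 ≤ t) : ¬ SegCross p q u v := by
  rintro ⟨x, hpq, huv, -⟩
  have hlin := (EuclideanSpace.proj (1 : Fin 2) : Pt →L[ℝ] ℝ).isLinear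
  have above : t < x 1 := (convex_halfSpace_gt hlin t).openSegment_subset hp hq hpq
  have below : x 1 ≤ t :=
    (convex_halfSpace_le hlin t).segment_subset hu hv (openSegment_subset_segment ℝ u v huv)
  exact below.not_gt above

theorem not_segCross_of_lt_of_le {N : ℕ} {P : Fin N → Pt} (hP : StrictAnti fun i => P i 1)
    {i j k l m : Fin N} (hi : i < m) (hj : j < m) (hk : m ≤ k) (hl : m ≤ l) :
    ¬ SegCross (P i) (P j) (P k) (P l) :=
  not_segCross_of_separated (hP hi) (hP hj) (hP.antitone hk) (hP.antitone hl)

theorem ordConnected_compl_union_of_strips {ι β : Type*} [Preorder ι] [Preorder β] {f : ι → β}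
    (hf : Antitone f) {C T1 T2 : Set ι} {y1 y2 : β} (hpart : ∀ i, i ∈ C ∨ i ∈ T1 ∨ i ∈ T2)
    (hT1 : ∀ i ∈ T1, y1 < f i) (hC : ∀ i ∈ C, y2 < f i ∧ f i < y1)
    (hT2 : ∀ i ∈ T2, f i < y2) : (T1 ∪ T2)ᶜ.OrdConnected := by
  refine ⟨fun i hi k hk j ⟨hij, hjk⟩ => ?_⟩
  have hiC : i ∈ C := (hpart i).resolve_right hi
  have hkC : k ∈ C := (hpart k).resolve_right hk
  rintro (hj | hj)
  · exact lt_asymm (hC i hiC).2 ((hT1 j hj).trans_le (hf hij))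
  · exact lt_asymm (hC k hkC).1 ((hf hjk).trans_lt (hT2 j hj))

section Potential

variable {N : ℕ} (T : Finset (Fin N))

theorem phiT_singleton (e : Fin N × Fin N) :
    PhiT T {e} = if e.1 ∈ T ∨ e.2 ∈ T then idist e else 0 := by
  rw [PhiT, Multiset.filter_singleton]
  split_ifs <;> simp

theorem phiT_cons (e : Fin N × Fin N) (s : Multiset (Fin N × Fin N)) :
    PhiT T (e ::ₘ s) = PhiT T {e} + PhiT T s := by
  simp [PhiT, ← Multiset.singleton_add, Multiset.filter_add]

theorem phiT_cons_cons_of_notMem {e f : Fin N × Fin N}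
    (h : ∀ i ∈ ({e.1, e.2, f.1, f.2} : Multiset (Fin N)), i ∉ T) (s : Multiset (Fin N × Fin N)) :
    PhiT T (e ::ₘ f ::ₘ s) = PhiT T s := by
  simp only [Multiset.insert_eq_cons, Multiset.mem_cons, Multiset.mem_singleton,
    forall_eq_or_imp, forall_eq] at h
  simp [phiT_cons, phiT_singleton, h]

theorem phiT_singleton_swap (i j : Fin N) : PhiT T {(i, j)} = PhiT T {(j, i)} := by
  simp [phiT_singleton, idist, max_comm, min_comm, or_comm]

theorem phiT_singleton_eq_of_pair_eq {i j k l : Fin N}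
    (h : ({i, j} : Multiset (Fin N)) = {k, l}) : PhiT T {(i, j)} = PhiT T {(k, l)} := by
  obtain ⟨rfl, rfl⟩ | ⟨rfl, rfl⟩ : i = k ∧ j = l ∨ i = l ∧ j = k := by
    simp only [Multiset.insert_eq_cons, Multiset.cons_eq_cons, Multiset.singleton_inj] at h
    aesop
  · rfl
  · exact phiT_singleton_swap T i j

variable {T} {a b c d : Fin N}

theorem phiT_lt_of_ordConnected_compl (hT : (↑T : Set (Fin N))ᶜ.OrdConnected)
    (hab : a < b) (hbc : b < c) (hcd : c < d) (hne : a ∈ T ∨ b ∈ T ∨ c ∈ T ∨ d ∈ T) :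
    PhiT T {(a, b)} + PhiT T {(c, d)} < PhiT T {(a, c)} + PhiT T {(b, d)} ∧
      PhiT T {(a, b)} + PhiT T {(c, d)} < PhiT T {(a, d)} + PhiT T {(b, c)} := by
  have gap : ∀ {i j k : Fin N}, i < j → j < k → i ∉ T → k ∉ T → j ∉ T :=
    fun hij hjk hi hk => hT.out hi hk ⟨hij.le, hjk.le⟩
  have habc := gap hab hbc
  have habd := gap hab (hbc.trans hcd)
  have hacd := gap (hab.trans hbc) hcd
  have hbcd := gap hbc hcd
  have : a.val < b.val := hab
  have : b.val < c.val := hbc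
  have : c.val < d.val := hcd
  simp only [phiT_singleton, idist]
  by_cases a ∈ T <;> by_cases b ∈ T <;> by_cases c ∈ T <;> by_cases d ∈ T <;> simp_all <;> omega

end Potential

section Flip

variable {N : ℕ} {P : Fin N → Pt} {T : Finset (Fin N)} {a b c d : Fin N}

theorem phiT_lt_of_segCross_of_fst_eq (hP : StrictAnti fun i => P i 1)
    (hT : (↑T : Set (Fin N))ᶜ.OrdConnected) (hab : a < b) (hbc : b < c) (hcd : c < d)
    (hne : a ∈ T ∨ b ∈ T ∨ c ∈ T ∨ d ∈ T) {v y z : Fin N}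
    (hends : ({a, v, y, z} : Multiset (Fin N)) = {a, b, c, d})
    (hcross : SegCross (P a) (P v) (P y) (P z)) :
    PhiT T {(a, b)} + PhiT T {(c, d)} < PhiT T {(a, v)} + PhiT T {(y, z)} := by
  have hrest : ({v, y, z} : Multiset (Fin N)) = {b, c, d} := (Multiset.cons_inj_right a).1 hends
  have hv : b = v ∨ c = v ∨ d = v := by
    have hmem : v ∈ ({b, c, d} : Multiset (Fin N)) := hrest ▸ by simp
    simpa [eq_comm] using hmem
  obtain ⟨hac_bd, had_bc⟩ := phiT_lt_of_ordConnected_compl hT hab hbc hcd hne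
  rcases hv with rfl | rfl | rfl
  · have hyz : ({y, z} : Multiset (Fin N)) = {c, d} := (Multiset.cons_inj_right b).1 hrest
    have hc_le : ∀ i ∈ ({y, z} : Multiset (Fin N)), c ≤ i := by
      rw [hyz]
      simpa using hcd.le
    exact absurd hcross (not_segCross_of_lt_of_le hP (hab.trans hbc) hbc
      (hc_le y (by simp)) (hc_le z (by simp)))
  · have hyz : ({y, z} : Multiset (Fin N)) = {b, d} :=
      (Multiset.cons_inj_right c).1 (hrest.trans (Multiset.cons_swap b c {d}))
    rwa [phiT_singleton_eq_of_pair_eq T hyz]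
  · have hyz : ({y, z} : Multiset (Fin N)) = {b, c} := by
      refine (Multiset.cons_inj_right d).1 (hrest.trans ?_)
      simp only [Multiset.insert_eq_cons, ← Multiset.singleton_add]
      abel
    rwa [phiT_singleton_eq_of_pair_eq T hyz]

theorem phiT_lt_of_segCross (hP : StrictAnti fun i => P i 1)
    (hT : (↑T : Set (Fin N))ᶜ.OrdConnected) (hab : a < b) (hbc : b < c) (hcd : c < d)
    (hne : a ∈ T ∨ b ∈ T ∨ c ∈ T ∨ d ∈ T) {e f : Fin N × Fin N}
    (hends : ({e.1, e.2, f.1, f.2} : Multiset (Fin N)) = {a, b, c, d})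
    (hcross : SegCross (P e.1) (P e.2) (P f.1) (P f.2)) :
    PhiT T {(a, b)} + PhiT T {(c, d)} < PhiT T {e} + PhiT T {f} := by
  -- Both sides are invariant under reorienting `e`, `f` and exchanging them, so we move the
  -- endpoint `a` to the front of `e`.
  obtain ⟨u, v⟩ := e
  obtain ⟨y, z⟩ := f
  dsimp only at hends hcross ⊢
  have key {v y z : Fin N} := phiT_lt_of_segCross_of_fst_eq (v := v) (y := y) (z := z)
    hP hT hab hbc hcd hne
  have ha : a ∈ ({u, v, y, z} : Multiset (Fin N)) := hends ▸ by simp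
  simp only [Multiset.insert_eq_cons, Multiset.mem_cons, Multiset.mem_singleton] at ha
  rcases ha with rfl | rfl | rfl | rfl
  · exact key hends hcross
  · rw [phiT_singleton_swap T u]
    exact key (hends ▸ Multiset.cons_swap a u _) hcross.swap_left
  · rw [add_comm (PhiT T {(u, v)})]
    refine key ?_ hcross.symm
    rw [← hends]
    simp only [Multiset.insert_eq_cons, ← Multiset.singleton_add]
    abel
  · rw [add_comm (PhiT T {(u, v)}), phiT_singleton_swap T y]
    refine key ?_ hcross.symm.swap_left
    rw [← hends]
    simp only [Multiset.insert_eq_cons, ← Multiset.singleton_add]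
    abel

end Flip

theorem phi_potential_behaviour_general (N : ℕ) (P : Fin N → Pt)
    (hdec : ∀ i j : Fin N, i < j → P j 1 < P i 1)
    (C T1 T2 : Finset (Fin N))
    (hpart : ∀ i : Fin N, i ∈ C ∨ i ∈ T1 ∨ i ∈ T2)
    (hd1 : Disjoint C T1) (hd2 : Disjoint C T2)
    (y1 y2 : ℝ)
    (hT1 : ∀ i ∈ T1, y1 < P i 1)
    (hC : ∀ i ∈ C, y2 < P i 1 ∧ P i 1 < y1)
    (hT2 : ∀ i ∈ T2, P i 1 < y2)
    (S S' : Multiset (Fin N × Fin N))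
    (e1 e2 f1 f2 : Fin N × Fin N)
    (a b c d : Fin N) (hab : a < b) (hbc : b < c) (hcd : c < d)
    (he1 : e1 ∈ S) (he2 : e2 ∈ S.erase e1)
    (hcross : SegCross (P e1.1) (P e1.2) (P e2.1) (P e2.2))
    (hends : ({e1.1, e1.2, e2.1, e2.2} : Multiset (Fin N)) = ({a, b, c, d} : Multiset (Fin N)))
    (hends' : ({f1.1, f1.2, f2.1, f2.2} : Multiset (Fin N)) = ({a, b, c, d} : Multiset (Fin N)))
    (hS' : S' = f1 ::ₘ f2 ::ₘ ((S.erase e1).erase e2)) :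
    ((a ∈ T1 ∪ T2 ∨ b ∈ T1 ∪ T2 ∨ c ∈ T1 ∪ T2 ∨ d ∈ T1 ∪ T2) →
      f1 = (a, b) → f2 = (c, d) →
      PhiT (T1 ∪ T2) S' < PhiT (T1 ∪ T2) S) ∧
    ((a ∈ C ∧ b ∈ C ∧ c ∈ C ∧ d ∈ C) →
      PhiT (T1 ∪ T2) S' = PhiT (T1 ∪ T2) S) := by
  have hP : StrictAnti fun i => P i 1 := fun i j => hdec i j
  have hS : S = e1 ::ₘ e2 ::ₘ ((S.erase e1).erase e2) := by
    rw [Multiset.cons_erase he2, Multiset.cons_erase he1]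
  subst hS'
  constructor
  · rintro hne rfl rfl
    have hT : (↑(T1 ∪ T2) : Set (Fin N))ᶜ.OrdConnected := by
      rw [Finset.coe_union]
      exact ordConnected_compl_union_of_strips hP.antitone hpart hT1 hC hT2
    have hlt := phiT_lt_of_segCross hP hT hab hbc hcd hne hends hcross
    conv_rhs => rw [hS]
    simp only [phiT_cons]
    omega
  · rintro ⟨ha, hb, hc, hd⟩
    have hCT : Disjoint C (T1 ∪ T2) := Finset.disjoint_union_right.2 ⟨hd1, hd2⟩
    have hout : ∀ i ∈ ({a, b, c, d} : Multiset (Fin N)), i ∉ T1 ∪ T2 := by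
      simp only [Multiset.insert_eq_cons, Multiset.mem_cons, Multiset.mem_singleton]
      rintro i (rfl | rfl | rfl | rfl) <;> exact Finset.disjoint_left.1 hCT ‹_›
    conv_rhs => rw [hS]
    rw [phiT_cons_cons_of_notMem _ (hends' ▸ hout), phiT_cons_cons_of_notMem _ (hends ▸ hout)]

/-- With points indexed by decreasing `y`-coordinate, `C` in convex position
between two horizontal lines, `T1` above and `T2` below: a flip on four points
`a < b < c < d` (in vertical order) involving a point of `T = T1 ∪ T2`, with the
insertion choice `{p_a p_b, p_c p_d}`, strictly decreases `Φ_T`, while a flip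
involving only points of `C` leaves `Φ_T` unchanged. -/
theorem phi_potential_behaviour (N : ℕ) (P : Fin N → Pt)
    (hdec : ∀ i j : Fin N, i < j → P j 1 < P i 1)
    (C T1 T2 : Finset (Fin N))
    (hpart : ∀ i : Fin N, i ∈ C ∨ i ∈ T1 ∨ i ∈ T2)
    (hd1 : Disjoint C T1) (hd2 : Disjoint C T2) (hd3 : Disjoint T1 T2)
    (y1 y2 : ℝ) (hy : y2 < y1)
    (hT1 : ∀ i ∈ T1, y1 < P i 1)
    (hC : ∀ i ∈ C, y2 < P i 1 ∧ P i 1 < y1)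
    (hT2 : ∀ i ∈ T2, P i 1 < y2)
    (hconv : ConvexPos (P '' (C : Set (Fin N))))
    (S S' : Multiset (Fin N × Fin N))
    (e1 e2 f1 f2 : Fin N × Fin N)
    (a b c d : Fin N) (hab : a < b) (hbc : b < c) (hcd : c < d)
    (he1 : e1 ∈ S) (he2 : e2 ∈ S.erase e1)
    (hcross : SegCross (P e1.1) (P e1.2) (P e2.1) (P e2.2))
    (hnocross : ¬ SegCross (P f1.1) (P f1.2) (P f2.1) (P f2.2))
    (hends : ({e1.1, e1.2, e2.1, e2.2} : Multiset (Fin N)) = ({a, b, c, d} : Multiset (Fin N)))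
    (hends' : ({f1.1, f1.2, f2.1, f2.2} : Multiset (Fin N)) = ({a, b, c, d} : Multiset (Fin N)))
    (hS' : S' = f1 ::ₘ f2 ::ₘ ((S.erase e1).erase e2)) :
    ((a ∈ T1 ∪ T2 ∨ b ∈ T1 ∪ T2 ∨ c ∈ T1 ∪ T2 ∨ d ∈ T1 ∪ T2) →
      f1 = (a, b) → f2 = (c, d) →
      PhiT (T1 ∪ T2) S' < PhiT (T1 ∪ T2) S) ∧
    ((a ∈ C ∧ b ∈ C ∧ c ∈ C ∧ d ∈ C) →
      PhiT (T1 ∪ T2) S' = PhiT (T1 ∪ T2) S) :=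
  phi_potential_behaviour_general N P hdec C T1 T2 hpart hd1 hd2 y1 y2 hT1 hC hT2 S S' e1 e2 f1 f2 a
    b c d hab hbc hcd he1 he2 hcross hends hends' hS'
end
end

section
/- Let q be a point outside the convex hull of a point set C in convex position, and let s be a segment from q to a point of C such that s has no crossings with a set S of segments with endpoints in C ∪ {q}, but the line supporting s does cross some segment of S. Then no flip performed on two segments of S can insert a segment crossing s; i.e., s is uncrossable. -/
noncomputable section

/-!
Let `L` be the line through `q` and `p`. Convex position and `e1 ≠ e2` make the four endpoints
`a, b` of `e1` and `c, d` of `e2` distinct, so an inserted segment joins either the two endpoints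
of a removed segment, which does not cross `qp`, or, say, `a` and `c`. Suppose `ac` crossed `qp`
at `z`. Then `a` and `c` lie strictly on opposite sides of `L`, and the crossing point `y` of `ab`
and `cd` is not strictly on the side of one of them, say of `a`. Then `L` meets the side `ay` of
the triangle `T = conv {y, a, c}` at a point `w` of `ab`, which lies outside the open segment `qp`
because `ab` does not cross `qp`. Since `z` lies inside that open segment, `q` or `p` lies
between `z` and `w`, hence in `T`. But `T ⊆ conv {a, b, c} ∩ conv {a, c, d}`: this excludes `q`,
which is outside `conv C`, and by convex position it forces `p = b = d`.
-/

open AffineMap Set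

lemma ConvexPos.mem_of_mem_convexHull {P s : Set Pt} (hP : ConvexPos P) {x : Pt} (hx : x ∈ P)
    (hs : s ⊆ P) (h : x ∈ convexHull ℝ s) : x ∈ s := by
  by_contra hxs
  have hsub : s ⊆ P \ {x} := fun y hy =>
    ⟨hs hy, fun hyx => hxs (mem_singleton_iff.1 hyx ▸ hy)⟩
  exact hP x hx (convexHull_mono hsub h)

lemma ConvexPos.eq_of_mem_openSegment {C : Set Pt} (hC : ConvexPos C) {a c d : Pt} (ha : a ∈ C)
    (hc : c ∈ C) (hd : d ∈ C) (h : a ∈ openSegment ℝ c d) : a = c ∧ a = d := by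
  have hacd : a ∈ ({c, d} : Set Pt) := ConvexPos.mem_of_mem_convexHull hC ha
    (pair_subset hc hd) (by rw [convexHull_pair]; exact openSegment_subset_segment ℝ c d h)
  rcases hacd with rfl | rfl
  · exact ⟨rfl, left_mem_openSegment_iff.1 h⟩
  · exact ⟨(right_mem_openSegment_iff.1 h).symm, rfl⟩

lemma convexHull_insert_subset_convexHull {E : Type*} [AddCommGroup E] [Module ℝ E]
    {s t : Set E} {y : E} (hy : y ∈ convexHull ℝ t) (hst : s ⊆ t) :
    convexHull ℝ (insert y s) ⊆ convexHull ℝ t :=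
  convexHull_min (insert_subset hy (hst.trans (subset_convexHull ℝ t))) (convex_convexHull ℝ t)

lemma left_or_right_mem_segment_lineMap {E : Type*} [AddCommGroup E] [Module ℝ E] (q p : E)
    {s t : ℝ} (hs : s ∈ Ioo (0 : ℝ) 1) (ht : t ∉ Ioo (0 : ℝ) 1) :
    q ∈ segment ℝ (lineMap q p s) (lineMap q p t) ∨
      p ∈ segment ℝ (lineMap q p s) (lineMap q p t) := by
  rw [← image_segment ℝ (lineMap q p) s t, segment_eq_uIcc]
  rcases le_or_gt t 0 with ht0 | ht0
  · exact .inl ⟨0, mem_uIcc.2 (.inr ⟨ht0, hs.1.le⟩), lineMap_apply_zero q p⟩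
  · have ht1 : 1 ≤ t := not_lt.1 fun ht1 => ht ⟨ht0, ht1⟩
    exact .inr ⟨1, mem_uIcc.2 (.inl ⟨hs.2.le, ht1⟩), lineMap_apply_one q p⟩

lemma eq_of_lineMap_eq_zero {α β s t : ℝ} (hα : α ≠ 0) (hs : lineMap α β s = 0)
    (ht : lineMap α β t = 0) : s = t := by
  simp only [lineMap_apply_module, smul_eq_mul] at hs ht
  have hβα : β - α ≠ 0 := fun h => hα (by linear_combination hs - s * h)
  exact mul_right_cancel₀ hβα (by linear_combination hs - ht)

lemma exists_mem_Ioc_lineMap_eq_zero {α β : ℝ} (hα : α ≠ 0) (hαβ : α * β ≤ 0) :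
    ∃ r ∈ Ioc (0 : ℝ) 1, lineMap α β r = 0 := by
  have hα2 : 0 < α ^ 2 := pow_pos (abs_pos.2 hα) 2 |>.trans_eq (sq_abs α)
  have hD : 0 < α ^ 2 - α * β := by linarith
  have hαβ' : α - β ≠ 0 := fun h => hD.ne' (by linear_combination α * h)
  refine ⟨α ^ 2 / (α ^ 2 - α * β),
    ⟨div_pos hα2 hD, (div_le_one hD).2 (by linarith)⟩, ?_⟩
  rw [lineMap_apply_module, smul_eq_mul, smul_eq_mul]
  field_simp
  ring

def orient (q p x : Pt) : ℝ := (p 0 - q 0) * (x 1 - q 1) - (p 1 - q 1) * (x 0 - q 0)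

lemma orient_lineMap (q p a b : Pt) (t : ℝ) :
    orient q p (lineMap a b t) = lineMap (orient q p a) (orient q p b) t := by
  simp only [orient, lineMap_apply_module, PiLp.add_apply, PiLp.smul_apply, smul_eq_mul]
  ring

lemma orient_self_left (q p : Pt) : orient q p q = 0 := by
  simp [orient]

lemma orient_self_right (q p : Pt) : orient q p p = 0 := by
  simp only [orient]; ring

lemma orient_lineMap_self (q p : Pt) (t : ℝ) : orient q p (lineMap q p t) = 0 := by
  rw [orient_lineMap, orient_self_left, orient_self_right, lineMap_same_apply]

lemma orient_eq_zero_iff {q p x : Pt} (hqp : q ≠ p) :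
    orient q p x = 0 ↔ ∃ t : ℝ, lineMap q p t = x := by
  refine ⟨fun hx => ?_, fun ⟨t, ht⟩ => ht ▸ orient_lineMap_self q p t⟩
  have hN : (p 0 - q 0) ^ 2 + (p 1 - q 1) ^ 2 ≠ 0 := by
    refine fun h0 => hqp (PiLp.ext (Fin.forall_fin_two.2 ⟨?_, ?_⟩)) <;>
      nlinarith [sq_nonneg (p 0 - q 0), sq_nonneg (p 1 - q 1)]
  refine ⟨((p 0 - q 0) * (x 0 - q 0) + (p 1 - q 1) * (x 1 - q 1)) /
    ((p 0 - q 0) ^ 2 + (p 1 - q 1) ^ 2), PiLp.ext (Fin.forall_fin_two.2 ⟨?_, ?_⟩)⟩ <;>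
  · simp only [lineMap_apply_module, PiLp.add_apply, PiLp.smul_apply, smul_eq_mul]
    field_simp
    unfold orient at hx
    first
      | linear_combination (p 1 - q 1) * hx
      | linear_combination (-(p 0 - q 0)) * hx

lemma orient_eq_zero_of_mem_segment {q p x : Pt} (hx : x ∈ segment ℝ q p) :
    orient q p x = 0 := by
  rw [segment_eq_image_lineMap] at hx
  obtain ⟨t, -, rfl⟩ := hx
  exact orient_lineMap_self q p t

lemma segCross_comm {a b c d : Pt} : SegCross a b c d ↔ SegCross c d a b :=
  ⟨fun ⟨x, hab, hcd, hx⟩ => ⟨x, hcd, hab, fun y hcd hab => hx y hab hcd⟩,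
    fun ⟨x, hcd, hab, hx⟩ => ⟨x, hab, hcd, fun y hab hcd => hx y hcd hab⟩⟩

lemma segCross_swap_left {a b c d : Pt} : SegCross b a c d ↔ SegCross a b c d := by
  simp only [SegCross, openSegment_symm ℝ b a, segment_symm ℝ b a]

lemma segCross_swap_right {a b c d : Pt} : SegCross a b d c ↔ SegCross a b c d := by
  rw [segCross_comm, segCross_swap_left, segCross_comm]

lemma mem_openSegment_of_segCross_self {a c d : Pt} (h : SegCross a a c d) :
    a ∈ openSegment ℝ c d := by
  obtain ⟨x, hx, hxcd, -⟩ := h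
  rw [openSegment_same, mem_singleton_iff] at hx
  rwa [← hx]

lemma segCross_of_mem_openSegment {q p a b z : Pt} (ha : orient q p a ≠ 0)
    (hzqp : z ∈ openSegment ℝ q p) (hzab : z ∈ openSegment ℝ a b) : SegCross q p a b := by
  refine ⟨z, hzqp, hzab, fun y hyqp hyab => ?_⟩
  have hz := orient_eq_zero_of_mem_segment (openSegment_subset_segment ℝ q p hzqp)
  have hy := orient_eq_zero_of_mem_segment hyqp
  rw [openSegment_eq_image_lineMap] at hzab
  rw [segment_eq_image_lineMap] at hyab
  obtain ⟨s, -, rfl⟩ := hzab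
  obtain ⟨t, -, rfl⟩ := hyab
  rw [orient_lineMap] at hz hy
  rw [eq_of_lineMap_eq_zero ha hy hz]

lemma not_segCross_lineMap {q p : Pt} (hqp : q ≠ p) {tu tw : ℝ} (htuw : tu ≠ tw) :
    ¬ SegCross (lineMap q p tu) (lineMap q p tw) q p := by
  rintro ⟨z, hzuw, hzqp, huniq⟩
  have hinj := lineMap_injective ℝ hqp
  rw [← image_openSegment, openSegment_eq_Ioo' htuw] at hzuw
  obtain ⟨s, hs, rfl⟩ := hzuw
  rw [openSegment_eq_image_lineMap] at hzqp
  obtain ⟨s', hs', hss'⟩ := hzqp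
  obtain rfl := hinj hss'
  -- the left end of the overlap of the two parameter intervals is a second common point
  set t := max (min tu tw) 0
  have htuw : lineMap q p t ∈ segment ℝ (lineMap q p tu) (lineMap q p tw) := by
    rw [← image_segment, segment_eq_uIcc]
    exact ⟨t, ⟨le_max_left _ _, max_le min_le_max (hs'.1.trans hs.2).le⟩, rfl⟩
  have htqp : lineMap q p t ∈ segment ℝ q p := by
    rw [segment_eq_image_lineMap]
    exact ⟨t, ⟨le_max_right _ _, max_le (hs.1.trans hs'.2).le zero_le_one⟩, rfl⟩
  exact (max_lt hs.1 hs'.1).ne (hinj (huniq _ htuw htqp))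

lemma orient_mul_neg_of_segCross {q p u w : Pt} (hqp : q ≠ p) (huw : u ≠ w)
    (h : SegCross u w q p) : orient q p u * orient q p w < 0 := by
  by_contra hnonneg
  replace hnonneg := not_lt.1 hnonneg
  obtain ⟨z, hzuw, hzqp, -⟩ := id h
  have hz := orient_eq_zero_of_mem_segment (openSegment_subset_segment ℝ q p hzqp)
  rw [openSegment_eq_image_lineMap] at hzuw
  obtain ⟨s, hs, rfl⟩ := hzuw
  rw [orient_lineMap, lineMap_apply_module, smul_eq_mul, smul_eq_mul] at hz
  have hu : orient q p u = 0 := by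
    have key : (1 - s) * orient q p u ^ 2 = -(s * (orient q p u * orient q p w)) := by
      linear_combination orient q p u * hz
    refine pow_eq_zero_iff two_ne_zero |>.1 (le_antisymm ?_ (sq_nonneg _))
    nlinarith [mul_nonneg hs.1.le hnonneg, sub_pos.2 hs.2]
  have hw : orient q p w = 0 := by
    rw [hu] at hz
    exact (mul_eq_zero.1 (by linarith)).resolve_left hs.1.ne'
  obtain ⟨tu, rfl⟩ := (orient_eq_zero_iff hqp).1 hu
  obtain ⟨tw, rfl⟩ := (orient_eq_zero_iff hqp).1 hw
  exact not_segCross_lineMap hqp (ne_of_apply_ne _ huw) h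

lemma exists_lineMap_mem_segment_of_not_segCross {q p a b y : Pt} (hqp : q ≠ p)
    (ha : orient q p a ≠ 0) (hy : y ∈ openSegment ℝ a b)
    (hay : orient q p a * orient q p y ≤ 0) (hab : ¬ SegCross q p a b) :
    ∃ t ∉ Ioo (0 : ℝ) 1, lineMap q p t ∈ segment ℝ a y := by
  obtain ⟨r, hr, hw⟩ := exists_mem_Ioc_lineMap_eq_zero ha hay
  rw [← orient_lineMap] at hw
  obtain ⟨t, ht⟩ := (orient_eq_zero_iff hqp).1 hw
  refine ⟨t, fun htI => hab (segCross_of_mem_openSegment (z := lineMap q p t) ha ?_ ?_), ?_⟩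
  · rw [openSegment_eq_image_lineMap]
    exact ⟨t, htI, rfl⟩
  · rw [openSegment_eq_image_lineMap] at hy
    obtain ⟨s, hs, rfl⟩ := hy
    rw [ht, lineMap_lineMap_right, openSegment_eq_image_lineMap]
    exact ⟨r * s, ⟨mul_pos hr.1 hs.1, mul_lt_one_of_nonneg_of_lt_one_right hr.2 hs.1.le hs.2⟩,
      rfl⟩
  · rw [ht, segment_eq_image_lineMap]
    exact ⟨r, ⟨hr.1.le, hr.2⟩, rfl⟩

lemma not_segCross_of_crossing {C : Set Pt} (hC : ConvexPos C) {q p a b c d y : Pt}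
    (ha : a ∈ C) (hb : b ∈ C) (hc : c ∈ C) (hd : d ∈ C) (hp : p ∈ C)
    (hq : q ∉ convexHull ℝ C) (hyab : y ∈ openSegment ℝ a b)
    (hycd : y ∈ openSegment ℝ c d) (hac : a ≠ c) (hbd : b ≠ d) (hab : ¬ SegCross q p a b)
    (hcd : ¬ SegCross q p c d) :
    ¬ SegCross a c q p := by
  intro hcross
  have hqp : q ≠ p := by rintro rfl; exact hq (subset_convexHull ℝ C hp)
  have hside := orient_mul_neg_of_segCross hqp hac hcross
  obtain ⟨z, hzac, hzqp, -⟩ := hcross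
  set T := convexHull ℝ {y, a, c}
  have hTabc : T ⊆ convexHull ℝ {a, b, c} := convexHull_insert_subset_convexHull
    (segment_subset_convexHull (by simp) (by simp) (openSegment_subset_segment ℝ a b hyab))
    (by simp [insert_subset_iff])
  have hTacd : T ⊆ convexHull ℝ {a, c, d} := convexHull_insert_subset_convexHull
    (segment_subset_convexHull (by simp) (by simp) (openSegment_subset_segment ℝ c d hycd))
    (by simp [insert_subset_iff])
  have hzT : z ∈ T := segment_subset_convexHull (by simp) (by simp)
    (openSegment_subset_segment ℝ a c hzac)
  obtain ⟨t, ht, htT⟩ : ∃ t ∉ Ioo (0 : ℝ) 1, lineMap q p t ∈ T := by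
    by_cases hay : orient q p a * orient q p y ≤ 0
    · obtain ⟨t, ht, hta⟩ := exists_lineMap_mem_segment_of_not_segCross hqp
        (left_ne_zero_of_mul hside.ne) hyab hay hab
      exact ⟨t, ht, segment_subset_convexHull (by simp) (by simp) hta⟩
    · have hcy : orient q p c * orient q p y ≤ 0 := by
        nlinarith [mul_neg_of_pos_of_neg (not_le.1 hay) hside, sq_nonneg (orient q p a)]
      obtain ⟨t, ht, htc⟩ := exists_lineMap_mem_segment_of_not_segCross hqp
        (right_ne_zero_of_mul hside.ne) hycd hcy hcd
      exact ⟨t, ht, segment_subset_convexHull (by simp) (by simp) htc⟩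
  rw [openSegment_eq_image_lineMap] at hzqp
  obtain ⟨s, hs, rfl⟩ := hzqp
  have hsegT := (convex_convexHull ℝ _).segment_subset hzT htT
  rcases left_or_right_mem_segment_lineMap q p hs ht with hqT | hpT
  · refine hq (convexHull_mono ?_ (hTabc (hsegT hqT)))
    simp [insert_subset_iff, ha, hb, hc]
  · have hpa : p ≠ a := fun h => left_ne_zero_of_mul hside.ne (h ▸ orient_self_right q p)
    have hpc : p ≠ c := fun h => right_ne_zero_of_mul hside.ne (h ▸ orient_self_right q p)
    have hpb : p = b := by
      simpa [hpa, hpc] using ConvexPos.mem_of_mem_convexHull hC hp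
        (by simp [insert_subset_iff, ha, hb, hc]) (hTabc (hsegT hpT))
    have hpd : p = d := by
      simpa [hpa, hpc] using ConvexPos.mem_of_mem_convexHull hC hp
        (by simp [insert_subset_iff, ha, hd, hc]) (hTacd (hsegT hpT))
    exact hbd (hpb.symm.trans hpd)

lemma eq_of_segCross_of_mem_segment {C : Set Pt} (hC : ConvexPos C) {a b c d : Pt}
    (ha : a ∈ C) (hc : c ∈ C) (hd : d ∈ C) (h : SegCross a b c d)
    (hacd : a ∈ segment ℝ c d) : a = b ∧ a = c ∧ a = d := by
  obtain ⟨x, hxab, hxcd, hx⟩ := h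
  obtain rfl := hx a (left_mem_segment ℝ a b) hacd
  exact ⟨left_mem_openSegment_iff.1 hxab, ConvexPos.eq_of_mem_openSegment hC ha hc hd hxcd⟩

lemma nodup_of_segCross {C : Set Pt} (hC : ConvexPos C) {a b c d : Pt} (ha : a ∈ C)
    (hb : b ∈ C) (hc : c ∈ C) (hd : d ∈ C) (h : SegCross a b c d) (hne : (a, b) ≠ (c, d)) :
    ({a, b, c, d} : Multiset Pt).Nodup := by
  have hall : ¬ (a = b ∧ a = c ∧ a = d) := by
    rintro ⟨rfl, rfl, rfl⟩
    exact hne rfl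
  have ha' : a ∉ segment ℝ c d := fun hm =>
    hall (eq_of_segCross_of_mem_segment hC ha hc hd h hm)
  have hb' : b ∉ segment ℝ c d := fun hm => hall <| by
    obtain ⟨rfl, rfl, rfl⟩ :=
      eq_of_segCross_of_mem_segment hC hb hc hd (segCross_swap_left.2 h) hm
    exact ⟨rfl, rfl, rfl⟩
  have hc' : c ∉ segment ℝ a b := fun hm => hall <| by
    obtain ⟨rfl, rfl, rfl⟩ := eq_of_segCross_of_mem_segment hC hc ha hb (segCross_comm.1 h) hm
    exact ⟨rfl, rfl, rfl⟩
  have hab : a ≠ b := by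
    rintro rfl
    exact ha' (openSegment_subset_segment ℝ c d (mem_openSegment_of_segCross_self h))
  have hcd : c ≠ d := by
    rintro rfl
    exact hc' (openSegment_subset_segment ℝ a b
      (mem_openSegment_of_segCross_self (segCross_comm.1 h)))
  simp only [Multiset.insert_eq_cons, Multiset.nodup_cons, Multiset.mem_cons,
    Multiset.mem_singleton, Multiset.nodup_singleton, not_or]
  exact ⟨⟨hab, fun h => ha' (h ▸ left_mem_segment ℝ c d),
      fun h => ha' (h ▸ right_mem_segment ℝ c d)⟩,
    ⟨fun h => hb' (h ▸ left_mem_segment ℝ c d), fun h => hb' (h ▸ right_mem_segment ℝ c d)⟩,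
    hcd, trivial⟩

lemma not_segCross_of_mem_endpoints {C : Set Pt} (hC : ConvexPos C) {q p a b c d : Pt}
    (ha : a ∈ C) (hb : b ∈ C) (hc : c ∈ C) (hd : d ∈ C) (hp : p ∈ C)
    (hq : q ∉ convexHull ℝ C) (hcross : SegCross a b c d)
    (hdistinct : ({a, b, c, d} : Multiset Pt).Nodup)
    (hab : ¬ SegCross q p a b) (hcd : ¬ SegCross q p c d) :
    ∀ u ∈ ({a, b, c, d} : Multiset Pt), ∀ w ∈ ({a, b, c, d} : Multiset Pt),
      u ≠ w → ¬ SegCross u w q p := by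
  simp only [Multiset.insert_eq_cons, Multiset.nodup_cons, Multiset.mem_cons,
    Multiset.mem_singleton, Multiset.nodup_singleton, not_or] at hdistinct ⊢
  obtain ⟨⟨-, hac', had'⟩, ⟨hbc', hbd'⟩, -, -⟩ := hdistinct
  obtain ⟨y, hyab, hycd, -⟩ := hcross
  have hyba : y ∈ openSegment ℝ b a := openSegment_symm ℝ a b ▸ hyab
  have hydc : y ∈ openSegment ℝ d c := openSegment_symm ℝ c d ▸ hycd
  have hba : ¬ SegCross q p b a := segCross_swap_right.not.2 hab
  have hdc : ¬ SegCross q p d c := segCross_swap_right.not.2 hcd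
  have hab₁ : ¬ SegCross a b q p := segCross_comm.not.1 hab
  have hcd₁ : ¬ SegCross c d q p := segCross_comm.not.1 hcd
  have hac := not_segCross_of_crossing hC ha hb hc hd hp hq hyab hycd hac' hbd' hab hcd
  have had := not_segCross_of_crossing hC ha hb hd hc hp hq hyab hydc had' hbc' hab hdc
  have hbc := not_segCross_of_crossing hC hb ha hc hd hp hq hyba hycd hbc' had' hba hcd
  have hbd := not_segCross_of_crossing hC hb ha hd hc hp hq hyba hydc hbd' hac' hba hdc
  have rev : ∀ {u w : Pt}, ¬ SegCross u w q p → ¬ SegCross w u q p :=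
    segCross_swap_left.not.2
  rintro u (rfl | rfl | rfl | rfl) w (rfl | rfl | rfl | rfl) huw <;>
    first
      | exact absurd rfl huw
      | assumption
      | exact rev ‹_›

theorem uncrossable_segment_general (C : Finset Pt) (hC : ConvexPos (C : Set Pt))
    (q p : Pt) (hp : p ∈ C) (hq : q ∉ convexHull ℝ (C : Set Pt))
    (S : Finset (Pt × Pt)) (hends : ∀ e ∈ S, e.1 ∈ C ∧ e.2 ∈ C)
    (hnocross : ∀ e ∈ S, ¬ SegCross q p e.1 e.2)
    (e1 e2 f1 f2 : Pt × Pt)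
    (he1 : e1 ∈ S) (he2 : e2 ∈ S) (hne : e1 ≠ e2)
    (hcross : SegCross e1.1 e1.2 e2.1 e2.2)
    (hends' : ({f1.1, f1.2, f2.1, f2.2} : Multiset Pt) = ({e1.1, e1.2, e2.1, e2.2} : Multiset Pt)) :
    ¬ SegCross f1.1 f1.2 q p ∧ ¬ SegCross f2.1 f2.2 q p := by
  obtain ⟨ha, hb⟩ := hends e1 he1
  obtain ⟨hc, hd⟩ := hends e2 he2
  have hdistinct := nodup_of_segCross hC ha hb hc hd hcross hne
  have hnot := not_segCross_of_mem_endpoints hC ha hb hc hd hp hq hcross hdistinct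
    (hnocross e1 he1) (hnocross e2 he2)
  rw [← hends'] at hnot hdistinct
  have h₁ : f1.1 ≠ f1.2 := fun h => by simp [h] at hdistinct
  have h₂ : f2.1 ≠ f2.2 := fun h => by simp [h] at hdistinct
  exact ⟨hnot _ (by simp) _ (by simp) h₁, hnot _ (by simp) _ (by simp) h₂⟩

/-- Let `q` be outside the convex hull of `C` (in convex position), and `s = qp`
a segment crossing no segment of `S` (all of whose endpoints are in `C`), while
the supporting line of `s` crosses some segment of `S`. Then no flip on two
segments of `S` can insert a segment crossing `s`: `s` is uncrossable. -/
theorem uncrossable_segment (C : Finset Pt) (hC : ConvexPos (C : Set Pt))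
    (q p : Pt) (hp : p ∈ C) (hq : q ∉ convexHull ℝ (C : Set Pt))
    (S : Finset (Pt × Pt)) (hends : ∀ e ∈ S, e.1 ∈ C ∧ e.2 ∈ C)
    (hnocross : ∀ e ∈ S, ¬ SegCross q p e.1 e.2)
    (hline : ∃ e ∈ S, LineThroughCrosses q p e.1 e.2)
    (e1 e2 f1 f2 : Pt × Pt)
    (he1 : e1 ∈ S) (he2 : e2 ∈ S) (hne : e1 ≠ e2)
    (hcross : SegCross e1.1 e1.2 e2.1 e2.2)
    (hends' : ({f1.1, f1.2, f2.1, f2.2} : Multiset Pt) = ({e1.1, e1.2, e2.1, e2.2} : Multiset Pt))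
    (hnc : ¬ SegCross f1.1 f1.2 f2.1 f2.2) :
    ¬ SegCross f1.1 f1.2 q p ∧ ¬ SegCross f2.1 f2.2 q p :=
  uncrossable_segment_general C hC q p hp hq S hends hnocross e1 e2 f1 f2 he1 he2 hne hcross hends'
end
end
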